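/- Let k ≥ 1 and let P be a k-Dyck path of length n, corresponding to the ascending parking preference (a_1,…,a_n) in which a_i equals 1 plus the number of Down steps of P occurring before the i-th Up step. Then (a_1,…,a_n) is a k-Naples parking function if and only if for every step of P that is a Down step taking the partial sum from 0 to −1, there exists a later step, occurring within the next 2k steps, after which the partial sum of P is strictly positive. -/

import Mathlib

/-!
Run the parking process along the path: the car of an Up step preceded by `d` Down steps prefers
spot `d + 1`, and after `t` steps as many spots are taken as there were Up steps.

If a Down step leads from height `0` to `-1` after `D` Down steps, only `D - 1` cars have arrived,
so some spot in `1, …, D` is free. A later car can fill the last such spot only by backing up over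
the full block `1, …, p`, which puts the path above `0` at once; and once `2k` steps have passed
without that, preferences exceed `D + k`, so no car reaches back that far and the spot stays empty.

Conversely, if a car fails, let `j` be the least free spot; the failing car preferred a spot beyond
`j + k`. Cars before the `j`-th Down step park below `j` and later ones above it, so just before
that step exactly `1, …, j - 1` are taken and the step goes from `0` to `-1`. If the path then rose
above `0` after `d` Down steps within `2k` steps, the cars of those steps would all park above `j`
but, having `j` within their backward reach, not beyond `d + 1`: more cars than spots.
-/

/-- The spots a car with preference `p` checks backward: `p-1, p-2, …, max(p-k,1)`. -/
def backCandidates (k p : ℕ) : List ℕ :=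
  ((List.range k).map (fun i => p - (i + 1))).filter (fun s => decide (1 ≤ s))

/-- The spots a car with preference `p` checks when driving forward: `p+1, …, n`. -/
def fwdCandidates (n p : ℕ) : List ℕ :=
  List.range' (p + 1) (n - p)

/-- The spot in which a car with preference `p` parks under the `k`-Naples rule on a
one-way street with `n` spots, given the set `occ` of already occupied spots
(`none` if the car fails to park). -/
def naplesStep (k n : ℕ) (occ : Finset ℕ) (p : ℕ) : Option ℕ :=
  if p ∈ occ then
    match (backCandidates k p).filter (fun s => decide (s ∉ occ)) with
    | s :: _ => some s
    | [] =>
      match (fwdCandidates n p).filter (fun s => decide (s ∉ occ)) with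
      | s :: _ => some s
      | [] => none
  else some p

/-- Runs the `k`-Naples parking process starting from occupied set `occ` for cars with
the given list of preferences.  Returns the list of spots in which the successive cars
park, or `none` if some car fails to park. -/
def naplesSpots (k n : ℕ) : Finset ℕ → List ℕ → Option (List ℕ)
  | _, [] => some []
  | occ, p :: rest =>
    match naplesStep k n occ p with
    | none => none
    | some s => (naplesSpots k n (insert s occ) rest).map (fun l => s :: l)

/-- All cars with the given preferences successfully park, starting from occupied set `occ`. -/
def ParksAllFrom (k n : ℕ) (occ : Finset ℕ) (prefs : List ℕ) : Prop :=
  (naplesSpots k n occ prefs).isSome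

/-- A parking preference of length `n`: a list of `n` numbers in `{1, …, n}`. -/
def IsParkingPref (n : ℕ) (prefs : List ℕ) : Prop :=
  prefs.length = n ∧ ∀ p ∈ prefs, 1 ≤ p ∧ p ≤ n

/-- A `k`-Naples parking function of length `n`. -/
def IsNaplesPF (k n : ℕ) (prefs : List ℕ) : Prop :=
  IsParkingPref n prefs ∧ ParksAllFrom k n ∅ prefs

/-- Signed sum of a list of steps (`true` = Up `+1`, `false` = Down `-1`). -/
def psum (P : List Bool) : ℤ :=
  (P.map (fun b => if b then (1 : ℤ) else -1)).sum

/-- A Dyck path of length `n`: `n` Up and `n` Down steps, all partial sums `≥ 0`. -/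
def IsDyckPath (n : ℕ) (P : List Bool) : Prop :=
  P.length = 2 * n ∧ P.count true = n ∧ ∀ t ≤ P.length, 0 ≤ psum (P.take t)

/-- A `k`-Dyck path of length `n`: `n` Up and `n` Down steps, all partial sums `≥ -k`,
ending with a Down step. -/
def IsKDyckPath (k n : ℕ) (P : List Bool) : Prop :=
  P.length = 2 * n ∧ P.count true = n ∧ (∀ t ≤ P.length, -(k : ℤ) ≤ psum (P.take t)) ∧
    P.getLast? = some false

/-- The ascending parking preference corresponding to a path: the `i`-th entry is
`1` plus the number of Down steps before the `i`-th Up step. -/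
def prefsOfPath (P : List Bool) : List ℕ :=
  ((List.range P.length).filter (fun j => P.getD j false)).map
    (fun j => 1 + (P.take j).count false)

theorem List.Pairwise.eq_false_of_filter_eq_cons {α : Type*} {R : α → α → Prop}
    (hR : ∀ a b, R a b → ¬ R b a) {l : List α} (hl : l.Pairwise R) {q : α → Bool} {s : α}
    {rest : List α} (h : l.filter q = s :: rest) {x : α} (hx : x ∈ l) (hxs : R x s) :
    q x = false := by
  obtain ⟨l₁, l₂, rfl, hl₁, -, -⟩ := List.filter_eq_cons_iff.1 h
  rw [List.pairwise_append, List.pairwise_cons] at hl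
  rcases List.mem_append.1 hx with hx | hx
  · simpa using hl₁ x hx
  · rcases List.mem_cons.1 hx with rfl | hx
    · exact absurd hxs (fun h' => hR _ _ h' h')
    · exact absurd (hl.2.1.1 x hx) (hR _ _ hxs)

theorem mem_backCandidates {k p x : ℕ} :
    x ∈ backCandidates k p ↔ 1 ≤ x ∧ p - k ≤ x ∧ x < p := by
  simp only [backCandidates, List.mem_filter, List.mem_map, List.mem_range, decide_eq_true_eq]
  constructor
  · rintro ⟨⟨i, hi, rfl⟩, h1⟩
    omega
  · rintro ⟨h1, h2, h3⟩
    exact ⟨⟨p - x - 1, by omega, by omega⟩, h1⟩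

theorem mem_fwdCandidates {n p x : ℕ} : x ∈ fwdCandidates n p ↔ p < x ∧ x ≤ n := by
  simp only [fwdCandidates, List.mem_range']
  constructor
  · rintro ⟨i, hi, rfl⟩
    omega
  · rintro ⟨h1, h2⟩
    exact ⟨x - p - 1, by omega, by omega⟩

theorem backCandidates_pairwise (k p : ℕ) : (backCandidates k p).Pairwise (· > ·) := by
  have hmap : ((List.range k).map (fun i => p - (i + 1))).Pairwise (fun a b => 1 ≤ b → a > b) :=
    List.pairwise_map.2 <| List.pairwise_lt_range.imp fun hij hb => by omega
  exact (hmap.filter _).imp_of_mem fun _ hb hab => hab (by simpa using (List.mem_filter.1 hb).2)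

theorem fwdCandidates_pairwise (n p : ℕ) : (fwdCandidates n p).Pairwise (· < ·) :=
  List.pairwise_lt_range' _ Nat.one_pos

section NaplesStep

variable {k n : ℕ} {occ : Finset ℕ} {p s : ℕ}

theorem naplesStep_eq_some (h : naplesStep k n occ p = some s) :
    s ∉ occ ∧ (s = p ∨
      (1 ≤ s ∧ p - k ≤ s ∧ s < p ∧ ∀ x, s < x → x ≤ p → x ∈ occ) ∨
      (p < s ∧ s ≤ n ∧ (∀ x, 1 ≤ x → p - k ≤ x → x < p → x ∈ occ) ∧
        ∀ x, p ≤ x → x < s → x ∈ occ)) := by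
  unfold naplesStep at h
  split_ifs at h with hp
  · split at h
    · next s' _ hback =>
      cases h
      have hs := List.mem_filter.1 (hback ▸ List.mem_cons_self : s ∈ _)
      obtain ⟨hs1, hsk, hsp⟩ := mem_backCandidates.1 hs.1
      refine ⟨by simpa using hs.2, Or.inr (Or.inl ⟨hs1, hsk, hsp, fun x hsx hxp => ?_⟩)⟩
      rcases hxp.lt_or_eq with hxp | rfl
      · simpa using (backCandidates_pairwise k p).eq_false_of_filter_eq_cons
          (fun _ _ => lt_asymm) hback (mem_backCandidates.2 ⟨by omega, by omega, hxp⟩) hsx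
      · exact hp
    · next hback =>
      have hback' : ∀ x, 1 ≤ x → p - k ≤ x → x < p → x ∈ occ := fun x h1 h2 h3 => by
        simpa using List.filter_eq_nil_iff.1 hback x (mem_backCandidates.2 ⟨h1, h2, h3⟩)
      split at h
      · next s' _ hfwd =>
        cases h
        have hs := List.mem_filter.1 (hfwd ▸ List.mem_cons_self : s ∈ _)
        obtain ⟨hps, hsn⟩ := mem_fwdCandidates.1 hs.1
        refine ⟨by simpa using hs.2, Or.inr (Or.inr ⟨hps, hsn, hback', fun x hpx hxs => ?_⟩)⟩
        rcases hpx.lt_or_eq with hpx | rfl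
        · simpa using (fwdCandidates_pairwise n p).eq_false_of_filter_eq_cons
            (fun _ _ => lt_asymm) hfwd (mem_fwdCandidates.2 ⟨hpx, by omega⟩) hxs
        · exact hp
      · cases h
  · cases h
    exact ⟨hp, Or.inl rfl⟩

theorem naplesStep_eq_none (h : naplesStep k n occ p = none) :
    p ∈ occ ∧ (∀ x, 1 ≤ x → p - k ≤ x → x < p → x ∈ occ) ∧ ∀ x, p < x → x ≤ n → x ∈ occ := by
  unfold naplesStep at h
  split_ifs at h with hp
  · split at h
    · cases h
    · next hback =>
      split at h
      · cases h
      · next hfwd =>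
        refine ⟨hp, fun x h1 h2 h3 => ?_, fun x h1 h2 => ?_⟩
        · simpa using List.filter_eq_nil_iff.1 hback x (mem_backCandidates.2 ⟨h1, h2, h3⟩)
        · simpa using List.filter_eq_nil_iff.1 hfwd x (mem_fwdCandidates.2 ⟨h1, h2⟩)

theorem naplesStep_mem_Icc (h : naplesStep k n occ p = some s) (hp : p ∈ Finset.Icc 1 n) :
    s ∈ Finset.Icc 1 n := by
  rw [Finset.mem_Icc] at hp ⊢
  rcases (naplesStep_eq_some h).2 with rfl | ⟨_, _, _, _⟩ | ⟨_, _, _, _⟩ <;> omega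

theorem sub_le_naplesStep (h : naplesStep k n occ p = some s) : p - k ≤ s := by
  rcases (naplesStep_eq_some h).2 with rfl | ⟨_, _, _, _⟩ | ⟨_, _, _, _⟩ <;> omega

theorem mem_of_naplesStep_lt (h : naplesStep k n occ p = some s) (hsp : s < p) {x : ℕ}
    (hsx : s < x) (hxp : x ≤ p) : x ∈ occ := by
  rcases (naplesStep_eq_some h).2 with rfl | ⟨_, _, _, hocc⟩ | ⟨_, _, _, _⟩
  · omega
  · exact hocc x hsx hxp
  · omega

theorem le_naplesStep_of_notMem (h : naplesStep k n occ p = some s) {x : ℕ} (hx : x ∉ occ)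
    (hxp : x < p) : x ≤ s := by
  by_contra! hsx
  exact hx (mem_of_naplesStep_lt h (hsx.trans hxp) hsx hxp.le)

theorem naplesStep_le_of_notMem (h : naplesStep k n occ p = some s) {x : ℕ} (hx : x ∉ occ)
    (hpx : p ≤ x) : s ≤ x := by
  rcases (naplesStep_eq_some h).2 with rfl | ⟨_, _, _, _⟩ | ⟨_, _, _, hocc⟩
  · exact hpx
  · omega
  · by_contra! hxs
    exact hx (hocc x hpx hxs)

theorem naplesStep_le_of_backCandidate_notMem (h : naplesStep k n occ p = some s) {x : ℕ}
    (hx : x ∈ backCandidates k p) (hfree : x ∉ occ) : s ≤ p := by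
  rw [mem_backCandidates] at hx
  rcases (naplesStep_eq_some h).2 with rfl | ⟨_, _, _, _⟩ | ⟨_, _, hocc, _⟩
  · exact le_rfl
  · omega
  · exact absurd (hocc x hx.1 hx.2.1 hx.2.2) hfree

/-- A car with preference `p > D` can take the last free spot among `1, …, D` only by backing up
over the full block `1, …, p`. -/
theorem le_card_add_one_of_naplesStep_fills (h : naplesStep k n occ p = some s) {D x : ℕ}
    (hx : x ∈ Finset.Icc 1 D) (hxocc : x ∉ occ) (hDp : D < p)
    (hfull : Finset.Icc 1 D ⊆ insert s occ) : p ≤ occ.card + 1 ∧ p ≤ D + k := by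
  have hxs : x = s := by simpa [hxocc] using hfull hx
  subst hxs
  rw [Finset.mem_Icc] at hx
  have hblock : Finset.Icc 1 p ⊆ insert x occ := fun y hy => by
    rw [Finset.mem_Icc] at hy
    by_cases hyD : y ≤ D
    · exact hfull (Finset.mem_Icc.2 ⟨hy.1, hyD⟩)
    · exact Finset.mem_insert_of_mem (mem_of_naplesStep_lt h (by omega) (by omega) hy.2)
  have hcard := Finset.card_le_card hblock
  rw [Finset.card_insert_of_notMem hxocc, Nat.card_Icc] at hcard
  have := sub_le_naplesStep h
  omega

theorem add_lt_of_naplesStep_eq_none (h : naplesStep k n occ p = none) {x : ℕ} (hx : x ∉ occ)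
    (hx1 : 1 ≤ x) (hxn : x ≤ n) : x + k < p := by
  obtain ⟨hp, hback, hfwd⟩ := naplesStep_eq_none h
  by_contra! hpx
  rcases lt_trichotomy x p with hxp | rfl | hpx
  · exact hx (hback x hx1 (by omega) hxp)
  · exact hx hp
  · exact hx (hfwd x hpx hxn)

end NaplesStep

def parkCar (k n : ℕ) (occ : Finset ℕ) (p : ℕ) : Option (Finset ℕ) :=
  (naplesStep k n occ p).map (insert · occ)

section ParkCar

variable {k n : ℕ}

theorem parkCar_eq_some {occ O : Finset ℕ} {p : ℕ} :
    parkCar k n occ p = some O ↔ ∃ s, naplesStep k n occ p = some s ∧ insert s occ = O :=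
  Option.map_eq_some_iff

theorem parksAllFrom_iff_isSome_foldlM (occ : Finset ℕ) (l : List ℕ) :
    ParksAllFrom k n occ l ↔ (l.foldlM (parkCar k n) occ).isSome := by
  induction l generalizing occ with
  | nil => simp [ParksAllFrom, naplesSpots]
  | cons p l ih =>
    simp only [ParksAllFrom, naplesSpots, List.foldlM_cons, parkCar] at ih ⊢
    cases naplesStep k n occ p <;> simp [ih]

theorem card_of_foldlM_parkCar_eq_some {l : List ℕ} {occ O : Finset ℕ}
    (h : l.foldlM (parkCar k n) occ = some O) : O.card = occ.card + l.length := by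
  induction l generalizing occ with
  | nil => cases h; rfl
  | cons p l ih =>
    obtain ⟨occ', h₁, h₂⟩ := Option.bind_eq_some_iff.1 h
    obtain ⟨s, hs, rfl⟩ := parkCar_eq_some.1 h₁
    rw [ih h₂, Finset.card_insert_of_notMem (naplesStep_eq_some hs).1, List.length_cons]
    ring

theorem subset_of_foldlM_parkCar_eq_some {l : List ℕ} (hl : ∀ p ∈ l, 1 ≤ p ∧ p ≤ n)
    {occ O : Finset ℕ} (h : l.foldlM (parkCar k n) occ = some O) : O ⊆ occ ∪ Finset.Icc 1 n := by
  induction l generalizing occ with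
  | nil => cases h; exact Finset.subset_union_left
  | cons p l ih =>
    obtain ⟨occ', h₁, h₂⟩ := Option.bind_eq_some_iff.1 h
    obtain ⟨s, hs, rfl⟩ := parkCar_eq_some.1 h₁
    have hs' := naplesStep_mem_Icc hs (Finset.mem_Icc.2 (hl p List.mem_cons_self))
    refine (ih (fun q hq => hl q (List.mem_cons_of_mem p hq)) h₂).trans ?_
    rw [Finset.insert_union]
    exact Finset.insert_subset (Finset.mem_union_right _ hs') le_rfl

end ParkCar

theorem Finset.exists_minimal_notMem_Icc_of_card_lt {s : Finset ℕ} {n : ℕ} (hs : s.card < n) :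
    ∃ j, 1 ≤ j ∧ j ≤ n ∧ j ∉ s ∧ ∀ x, 1 ≤ x → x < j → x ∈ s := by
  have hfree : ∃ j, 1 ≤ j ∧ j ≤ n ∧ j ∉ s := by
    obtain ⟨j, hj, hjs⟩ := Finset.exists_mem_notMem_of_card_lt_card (s := s) (t := Finset.Icc 1 n)
      (by rwa [Nat.card_Icc, Nat.add_sub_cancel])
    exact ⟨j, (Finset.mem_Icc.1 hj).1, (Finset.mem_Icc.1 hj).2, hjs⟩
  obtain ⟨hj1, hjn, hj⟩ := Nat.find_spec hfree
  refine ⟨Nat.find hfree, hj1, hjn, hj, fun x hx1 hxj => ?_⟩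
  by_contra hx
  exact Nat.find_min hfree hxj ⟨hx1, by omega, hx⟩

section Count

variable {α : Type*} [DecidableEq α]

theorem List.count_take_succ (l : List α) (t : ℕ) (a : α) :
    (l.take (t + 1)).count a = (l.take t).count a + if l[t]? = some a then 1 else 0 := by
  rw [List.take_add_one, List.count_append]
  rcases l[t]? with _ | b
  · simp
  · by_cases hb : b = a <;> simp [hb]

theorem List.count_take_mono (l : List α) (a : α) {t t' : ℕ} (h : t ≤ t') :
    (l.take t).count a ≤ (l.take t').count a :=
  (List.take_prefix_take_left h).sublist.count_le a

theorem List.exists_getElem?_eq_of_lt_count_take {l : List α} {a : α} {c T : ℕ}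
    (h : c < (l.take T).count a) : ∃ σ < T, (l.take σ).count a = c ∧ l[σ]? = some a := by
  induction T with
  | zero => simp at h
  | succ T ih =>
    rw [List.count_take_succ] at h
    by_cases hc : c < (l.take T).count a
    · obtain ⟨σ, hσ, h⟩ := ih hc
      exact ⟨σ, by omega, h⟩
    · split_ifs at h with hT
      · exact ⟨T, by omega, by omega, hT⟩
      · omega

end Count

theorem psum_eq_count_sub_count (l : List Bool) :
    psum l = (l.count true : ℤ) - l.count false := by
  induction l with
  | nil => simp [psum]
  | cons b l ih =>
    simp only [psum, List.map_cons, List.sum_cons] at ih ⊢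
    cases b <;> simp [ih] <;> ring

theorem count_take_succ_of_up {P : List Bool} {t : ℕ} (h : P[t]? = some true) :
    (P.take (t + 1)).count true = (P.take t).count true + 1 ∧
      (P.take (t + 1)).count false = (P.take t).count false := by
  simp [List.take_add_one, h]

theorem count_take_succ_of_down {P : List Bool} {t : ℕ} (h : P[t]? = some false) :
    (P.take (t + 1)).count true = (P.take t).count true ∧
      (P.take (t + 1)).count false = (P.take t).count false + 1 := by
  simp [List.take_add_one, h]

theorem count_false_take_lt_of_down_of_up {P : List Bool} {σ t : ℕ} (hσt : σ ≤ t)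
    (hdown : P[σ]? = some false) (hup : P[t]? = some true) :
    (P.take σ).count false < (P.take t).count false := by
  have hσt' : σ + 1 ≤ t := by
    rcases hσt.lt_or_eq with h | rfl
    · exact h
    · simp [hup] at hdown
  have := List.count_take_mono P false hσt'
  have := (count_take_succ_of_down hdown).2
  omega

theorem count_true_add_count_false_take {P : List Bool} {t : ℕ} (ht : t ≤ P.length) :
    (P.take t).count true + (P.take t).count false = t := by
  rw [List.count_true_add_count_false, List.length_take_of_le ht]

theorem count_false_take_add_le_of_psum_nonpos {P : List Bool} {t₀ k : ℕ}
    (hL : t₀ + 2 * k ≤ P.length) (hneg : psum (P.take t₀) = -1)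
    (hw : psum (P.take (t₀ + 2 * k)) ≤ 0) :
    (P.take t₀).count false + k ≤ (P.take (t₀ + 2 * k)).count false := by
  have := psum_eq_count_sub_count (P.take t₀)
  have := psum_eq_count_sub_count (P.take (t₀ + 2 * k))
  have := count_true_add_count_false_take hL
  have := count_true_add_count_false_take (show t₀ ≤ P.length by omega)
  omega

theorem mem_prefsOfPath {l : List Bool} {p : ℕ} :
    p ∈ prefsOfPath l ↔ ∃ t, l[t]? = some true ∧ 1 + (l.take t).count false = p := by
  simp only [prefsOfPath, List.mem_map, List.mem_filter, List.mem_range, List.getD_eq_getElem?_getD]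
  constructor
  · rintro ⟨t, ⟨ht, hget⟩, rfl⟩
    exact ⟨t, by simpa [List.getElem?_eq_getElem ht] using hget, rfl⟩
  · rintro ⟨t, hget, rfl⟩
    have ht : t < l.length := by
      by_contra! ht
      simp [List.getElem?_eq_none ht] at hget
    exact ⟨t, ⟨ht, by simp [hget]⟩, rfl⟩

theorem prefsOfPath_append_singleton (l : List Bool) (b : Bool) :
    prefsOfPath (l ++ [b]) = prefsOfPath l ++ if b then [1 + l.count false] else [] := by
  have hfilter : (List.range l.length).filter (fun j => (l ++ [b]).getD j false)
      = (List.range l.length).filter (fun j => l.getD j false) :=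
    List.filter_congr fun j hj => by rw [List.getD_append _ _ _ _ (List.mem_range.1 hj)]
  simp only [prefsOfPath, List.length_append, List.length_singleton, List.range_succ,
    List.filter_append, List.map_append, hfilter]
  congr 1
  · refine List.map_congr_left fun j hj => ?_
    have hj : j < l.length := List.mem_range.1 (List.mem_of_mem_filter hj)
    rw [List.take_append_of_le_length hj.le]
  · cases b <;> simp

theorem length_prefsOfPath (l : List Bool) : (prefsOfPath l).length = l.count true := by
  induction l using List.reverseRecOn with
  | nil => simp [prefsOfPath]
  | append_singleton l b ih =>
    rw [prefsOfPath_append_singleton, List.length_append, ih, List.count_append]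
    cases b <;> simp

theorem prefsOfPath_take_succ (P : List Bool) (t : ℕ) :
    prefsOfPath (P.take (t + 1)) =
      prefsOfPath (P.take t) ++ if P[t]? = some true then [1 + (P.take t).count false] else [] := by
  rw [List.take_add_one]
  rcases P[t]? with _ | b
  · simp
  · cases b <;> simp [prefsOfPath_append_singleton]

/-- The occupied spots once the cars of the first `t` steps of `P` have parked, or `none` if one
of them failed. -/
def occAfter (k n : ℕ) (P : List Bool) (t : ℕ) : Option (Finset ℕ) :=
  (prefsOfPath (P.take t)).foldlM (parkCar k n) ∅

section OccAfter

variable {k n : ℕ} {P : List Bool}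

theorem occAfter_zero : occAfter k n P 0 = some ∅ := by
  simp [occAfter, prefsOfPath]

theorem occAfter_succ (t : ℕ) :
    occAfter k n P (t + 1) = if P[t]? = some true then
      (occAfter k n P t).bind (parkCar k n · (1 + (P.take t).count false))
    else occAfter k n P t := by
  unfold occAfter
  rw [prefsOfPath_take_succ]
  split_ifs <;> simp [List.foldlM_append]

theorem occAfter_succ_of_naplesStep_eq_some {t : ℕ} (hup : P[t]? = some true) {O : Finset ℕ}
    (hO : occAfter k n P t = some O) {s : ℕ}
    (hs : naplesStep k n O (1 + (P.take t).count false) = some s) :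
    occAfter k n P (t + 1) = some (insert s O) := by
  rw [occAfter_succ, if_pos hup, hO, Option.bind_some]
  exact parkCar_eq_some.2 ⟨s, hs, rfl⟩

theorem occAfter_induction {Q : Finset ℕ → Prop} {a b : ℕ} (hab : a ≤ b) {A B : Finset ℕ}
    (hA : occAfter k n P a = some A) (hB : occAfter k n P b = some B) (hQA : Q A)
    (hstep : ∀ t O s, a ≤ t → t < b → P[t]? = some true → occAfter k n P t = some O →
      naplesStep k n O (1 + (P.take t).count false) = some s → Q O → Q (insert s O)) :
    Q B := by
  induction b, hab using Nat.le_induction generalizing B with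
  | base => cases hA.symm.trans hB; exact hQA
  | succ b hab ih =>
    have hstep' := fun t O s h₁ (h₂ : t < b) => hstep t O s h₁ (h₂.trans (lt_add_one b))
    rw [occAfter_succ] at hB
    split_ifs at hB with hup
    · obtain ⟨O, hO, hB⟩ := Option.bind_eq_some_iff.1 hB
      obtain ⟨s, hs, rfl⟩ := parkCar_eq_some.1 hB
      exact hstep b O s hab (lt_add_one b) hup hO hs (ih hO hstep')
    · exact ih hB hstep'

theorem exists_occAfter_eq_some_of_le {a b : ℕ} (hab : a ≤ b) {B : Finset ℕ}
    (hB : occAfter k n P b = some B) : ∃ A, occAfter k n P a = some A := by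
  induction b, hab using Nat.le_induction generalizing B with
  | base => exact ⟨B, hB⟩
  | succ b hab ih =>
    rw [occAfter_succ] at hB
    split_ifs at hB
    · obtain ⟨O, hO, -⟩ := Option.bind_eq_some_iff.1 hB
      exact ih hO
    · exact ih hB

theorem occAfter_mono {a b : ℕ} (hab : a ≤ b) {A B : Finset ℕ}
    (hA : occAfter k n P a = some A) (hB : occAfter k n P b = some B) : A ⊆ B :=
  occAfter_induction hab hA hB subset_rfl fun _ _ _ _ _ _ _ _ h => h.trans (Finset.subset_insert _ _)

theorem card_occAfter {t : ℕ} {O : Finset ℕ} (h : occAfter k n P t = some O) :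
    O.card = (P.take t).count true := by
  rw [card_of_foldlM_parkCar_eq_some h, Finset.card_empty, zero_add, length_prefsOfPath]

theorem exists_naplesStep_eq_none_of_occAfter_eq_none {T : ℕ} (h : occAfter k n P T = none) :
    ∃ t < T, ∃ O, occAfter k n P t = some O ∧ P[t]? = some true ∧
      naplesStep k n O (1 + (P.take t).count false) = none := by
  induction T with
  | zero => simp [occAfter_zero] at h
  | succ T ih =>
    rw [occAfter_succ] at h
    split_ifs at h with hup
    · rcases hO : occAfter k n P T with _ | O
      · obtain ⟨t, ht, H⟩ := ih hO
        exact ⟨t, by omega, H⟩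
      · rw [hO, Option.bind_some, parkCar, Option.map_eq_none_iff] at h
        exact ⟨T, lt_add_one T, O, hO, hup, h⟩
    · obtain ⟨t, ht, H⟩ := ih h
      exact ⟨t, by omega, H⟩

theorem parksAllFrom_prefsOfPath_iff :
    ParksAllFrom k n ∅ (prefsOfPath P) ↔ (occAfter k n P P.length).isSome := by
  rw [parksAllFrom_iff_isSome_foldlM, occAfter, List.take_length]

end OccAfter

section Path

variable {k n : ℕ} {P : List Bool}

theorem isParkingPref_prefsOfPath (hct : P.count true = n) (hcf : P.count false = n)
    (hlast : P.getLast? = some false) : IsParkingPref n (prefsOfPath P) := by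
  refine ⟨by rw [length_prefsOfPath, hct], fun p hp => ?_⟩
  obtain ⟨t, ht, rfl⟩ := mem_prefsOfPath.1 hp
  rw [List.getLast?_eq_getElem?] at hlast
  have hL : P.length - 1 + 1 = P.length := by
    have := (List.getElem?_eq_some_iff.1 hlast).1
    omega
  have htL : t < P.length - 1 := by
    have := (List.getElem?_eq_some_iff.1 ht).1
    rcases (show t < P.length - 1 ∨ t = P.length - 1 by omega) with h | rfl
    · exact h
    · simp [hlast] at ht
  have hlast_down := (count_take_succ_of_down hlast).2
  rw [hL, List.take_length, hcf] at hlast_down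
  have := List.count_take_mono P false htL.le
  omega

theorem occAfter_length_eq_Icc (hpf : IsParkingPref n (prefsOfPath P)) {F : Finset ℕ}
    (hF : occAfter k n P P.length = some F) : F = Finset.Icc 1 n := by
  refine Finset.eq_of_subset_of_card_le ?_ ?_
  · rw [occAfter, List.take_length] at hF
    simpa using subset_of_foldlM_parkCar_eq_some hpf.2 hF
  · rw [card_occAfter hF, List.take_length, ← length_prefsOfPath, hpf.1, Nat.card_Icc]
    omega

theorem exists_pos_psum_of_occAfter_eq_some (hpf : IsParkingPref n (prefsOfPath P))
    (hcf : P.count false ≤ n) {F : Finset ℕ} (hF : occAfter k n P P.length = some F) {t₀ : ℕ}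
    (ht₀ : t₀ ≤ P.length) (hneg : psum (P.take t₀) = -1) :
    ∃ u, t₀ < u ∧ u ≤ t₀ + 2 * k ∧ u ≤ P.length ∧ 0 < psum (P.take u) := by
  by_contra! hno
  set D₀ := (P.take t₀).count false
  have hups₀ : (P.take t₀).count true + 1 = D₀ := by
    have := psum_eq_count_sub_count (P.take t₀)
    omega
  have hdowns : ∀ t, t₀ + 2 * k ≤ t → t ≤ P.length → D₀ + k ≤ (P.take t).count false := by
    intro t ht htL
    have hw : psum (P.take (t₀ + 2 * k)) ≤ 0 := by
      rcases Nat.eq_zero_or_pos k with rfl | hk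
      · simp [hneg]
      · exact hno _ (by omega) le_rfl (by omega)
    have := count_false_take_add_le_of_psum_nonpos (by omega) hneg hw
    have := List.count_take_mono P false ht
    omega
  obtain ⟨O₀, hO₀⟩ := exists_occAfter_eq_some_of_le ht₀ hF
  have hfree₀ : ∃ h ∈ Finset.Icc 1 D₀, h ∉ O₀ := by
    refine Finset.exists_mem_notMem_of_card_lt_card ?_
    rw [card_occAfter hO₀, Nat.card_Icc]
    omega
  obtain ⟨h, hh, hhF⟩ := occAfter_induction (Q := fun O => ∃ h ∈ Finset.Icc 1 D₀, h ∉ O)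
    ht₀ hO₀ hF hfree₀
    fun t O s ht₀t htL hup hO hs ⟨h, hh, hhO⟩ => by
      by_contra! hfull
      have hDt := List.count_take_mono P false ht₀t
      obtain ⟨hcard, hpk⟩ := le_card_add_one_of_naplesStep_fills hs hh hhO (by omega) hfull
      rw [card_occAfter hO] at hcard
      have htw : t + 1 ≤ t₀ + 2 * k := by
        by_contra! htw
        have := hdowns t (by omega) htL.le
        omega
      have hpos := hno (t + 1) (by omega) htw htL
      rw [psum_eq_count_sub_count] at hpos
      have := count_take_succ_of_up hup
      omega
  rw [occAfter_length_eq_Icc hpf hF, Finset.mem_Icc] at hhF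
  have := List.count_take_mono P false ht₀
  rw [List.take_length, Finset.mem_Icc] at *
  omega

end Path

section Failure

-- Below, `j` is a spot still free at time `T`, and `σ` is the position of the `j`-th Down step.

variable {k n : ℕ} {P : List Bool} {T : ℕ} {OT : Finset ℕ} {j : ℕ}

theorem notMem_insert_of_notMem_occAfter (hT : occAfter k n P T = some OT) (hj : j ∉ OT) {t : ℕ}
    (htT : t < T) (hup : P[t]? = some true) {O : Finset ℕ} (hO : occAfter k n P t = some O)
    {s : ℕ} (hs : naplesStep k n O (1 + (P.take t).count false) = some s) : j ∉ insert s O :=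
  fun h => hj (occAfter_mono htT (occAfter_succ_of_naplesStep_eq_some hup hO hs) hT h)

theorem lt_naplesStep_of_notMem_occAfter (hT : occAfter k n P T = some OT) (hj : j ∉ OT)
    {σ : ℕ} (hσ : (P.take σ).count false + 1 = j) (hdown : P[σ]? = some false) {t : ℕ}
    (hσt : σ ≤ t) (htT : t < T) (hup : P[t]? = some true) {O : Finset ℕ}
    (hO : occAfter k n P t = some O) {s : ℕ}
    (hs : naplesStep k n O (1 + (P.take t).count false) = some s) : j < s := by
  have hsj := notMem_insert_of_notMem_occAfter hT hj htT hup hO hs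
  rw [Finset.mem_insert, not_or] at hsj
  have hp := count_false_take_lt_of_down_of_up hσt hdown hup
  have := le_naplesStep_of_notMem hs hsj.2 (show j < _ by omega)
  omega

theorem occAfter_eq_Icc_of_notMem (hT : occAfter k n P T = some OT) (hj : j ∉ OT) (hjn : j ≤ n)
    (hbelow : ∀ x, 1 ≤ x → x < j → x ∈ OT) {σ : ℕ} (hσT : σ < T)
    (hσ : (P.take σ).count false + 1 = j) (hdown : P[σ]? = some false) :
    occAfter k n P σ = some (Finset.Icc 1 (j - 1)) := by
  obtain ⟨Oσ, hOσ⟩ := exists_occAfter_eq_some_of_le hσT.le hT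
  suffices Oσ = Finset.Icc 1 (j - 1) from this ▸ hOσ
  apply Finset.Subset.antisymm
  · refine occAfter_induction (Q := (· ⊆ Finset.Icc 1 (j - 1))) (Nat.zero_le σ) occAfter_zero
      hOσ (Finset.empty_subset _) fun t O s _ htσ hup hO hs hOj => Finset.insert_subset ?_ hOj
    have hsj := notMem_insert_of_notMem_occAfter hT hj (htσ.trans hσT) hup hO hs
    rw [Finset.mem_insert, not_or] at hsj
    have hp := List.count_take_mono P false htσ.le
    have hs₁ := Finset.mem_Icc.1 (naplesStep_mem_Icc hs (Finset.mem_Icc.2 ⟨by omega, by omega⟩))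
    have hs₂ := naplesStep_le_of_notMem hs hsj.2 (show _ ≤ j by omega)
    exact Finset.mem_Icc.2 ⟨hs₁.1, by omega⟩
  · have hlow := occAfter_induction (Q := fun O => ∀ x < j, x ∈ O → x ∈ Oσ) hσT.le hOσ hT
      (fun _ _ hx => hx) fun t O s hσt htT hup hO hs hOj x hxj hx => by
        rcases Finset.mem_insert.1 hx with rfl | hx
        · have := lt_naplesStep_of_notMem_occAfter hT hj hσ hdown hσt htT hup hO hs
          omega
        · exact hOj x hxj hx
    intro x hx
    rw [Finset.mem_Icc] at hx
    exact hlow x (by omega) (hbelow x hx.1 (by omega))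

theorem occAfter_subset_erase_of_notMem (hT : occAfter k n P T = some OT) (hj : j ∉ OT) {σ : ℕ}
    (hOσ : occAfter k n P σ = some (Finset.Icc 1 (j - 1)))
    (hσ : (P.take σ).count false + 1 = j) (hdown : P[σ]? = some false) {u : ℕ} (hσu : σ ≤ u)
    (huT : u ≤ T) (hDk : (P.take u).count false + 1 ≤ j + k) {Ou : Finset ℕ}
    (hOu : occAfter k n P u = some Ou) :
    Ou ⊆ (Finset.Icc 1 ((P.take u).count false + 1)).erase j := by
  have hjD := List.count_take_mono P false hσu
  refine occAfter_induction (Q := (· ⊆ (Finset.Icc 1 ((P.take u).count false + 1)).erase j))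
    hσu hOσ hOu (fun x hx => ?_) fun t O s hσt htu hup hO hs hOj => Finset.insert_subset ?_ hOj
  · rw [Finset.mem_Icc] at hx
    simp only [Finset.mem_erase, Finset.mem_Icc]
    omega
  · have hjs := lt_naplesStep_of_notMem_occAfter hT hj hσ hdown hσt (by omega) hup hO hs
    have hsj := notMem_insert_of_notMem_occAfter hT hj (by omega) hup hO hs
    rw [Finset.mem_insert, not_or] at hsj
    have htD := List.count_take_mono P false htu.le
    have hjt := count_false_take_lt_of_down_of_up hσt hdown hup
    -- `j` is within the car's backward reach, so it does not drive past its preference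
    have hsp := naplesStep_le_of_backCandidate_notMem hs
      (mem_backCandidates.2 ⟨by omega, by omega, by omega⟩) hsj.2
    simp only [Finset.mem_erase, Finset.mem_Icc]
    omega

theorem psum_nonpos_of_notMem (hT : occAfter k n P T = some OT) (hj : j ∉ OT)
    (hjk : j + k < 1 + (P.take T).count false) {σ : ℕ}
    (hOσ : occAfter k n P σ = some (Finset.Icc 1 (j - 1)))
    (hσ : (P.take σ).count false + 1 = j) (hdown : P[σ]? = some false) {u : ℕ}
    (hσu : σ + 1 < u) (hu : u ≤ σ + 1 + 2 * k) (huL : u ≤ P.length) : psum (P.take u) ≤ 0 := by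
  by_contra! hpos
  rw [psum_eq_count_sub_count] at hpos
  have hupsσ := card_occAfter hOσ
  rw [Nat.card_Icc] at hupsσ
  have hσ₁ := count_take_succ_of_down hdown
  have := count_true_add_count_false_take huL
  have := count_true_add_count_false_take (show σ + 1 ≤ P.length by omega)
  have hDk : (P.take u).count false + 1 ≤ j + k := by omega
  have hjD := List.count_take_mono P false hσu.le
  have huT : u ≤ T := by
    by_contra! hTu
    have := List.count_take_mono P false hTu.le
    omega
  obtain ⟨Ou, hOu⟩ := exists_occAfter_eq_some_of_le huT hT
  have := Finset.card_le_card
    (occAfter_subset_erase_of_notMem hT hj hOσ hσ hdown (by omega) huT hDk hOu)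
  rw [Finset.card_erase_of_mem (by simp only [Finset.mem_Icc]; omega), Nat.card_Icc,
    card_occAfter hOu] at this
  omega

theorem exists_stuck_down_step_of_occAfter_eq_none (hct : P.count true ≤ n)
    (h : occAfter k n P P.length = none) :
    ∃ t, 1 ≤ t ∧ t ≤ P.length ∧ psum (P.take (t - 1)) = 0 ∧ psum (P.take t) = -1 ∧
      ∀ u, t < u → u ≤ t + 2 * k → u ≤ P.length → psum (P.take u) ≤ 0 := by
  obtain ⟨T, hTL, OT, hT, hupT, hfail⟩ := exists_naplesStep_eq_none_of_occAfter_eq_none h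
  have hcard : OT.card < n := by
    rw [card_occAfter hT]
    have := (count_take_succ_of_up hupT).1
    have := List.count_take_mono P true (show T + 1 ≤ P.length by omega)
    rw [List.take_length] at this
    omega
  obtain ⟨j, hj1, hjn, hj, hbelow⟩ := Finset.exists_minimal_notMem_Icc_of_card_lt hcard
  have hjk := add_lt_of_naplesStep_eq_none hfail hj hj1 hjn
  obtain ⟨σ, hσT, hσ, hdown⟩ := List.exists_getElem?_eq_of_lt_count_take
    (show j - 1 < (P.take T).count false by omega)
  replace hσ : (P.take σ).count false + 1 = j := by omega
  have hOσ := occAfter_eq_Icc_of_notMem hT hj hjn hbelow hσT hσ hdown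
  have hupsσ := card_occAfter hOσ
  rw [Nat.card_Icc] at hupsσ
  have hσ₁ := count_take_succ_of_down hdown
  refine ⟨σ + 1, by omega, by omega, ?_, ?_, fun u hσu hu huL =>
    psum_nonpos_of_notMem hT hj hjk hOσ hσ hdown hσu hu huL⟩
  · rw [Nat.add_sub_cancel, psum_eq_count_sub_count]
    omega
  · rw [psum_eq_count_sub_count]
    omega

end Failure

theorem statement2_general (k n : ℕ) (P : List Bool) (hP : IsKDyckPath k n P) :
    IsNaplesPF k n (prefsOfPath P) ↔
      ∀ t : ℕ, 1 ≤ t → t ≤ P.length → psum (P.take (t - 1)) = 0 →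
        psum (P.take t) = -1 →
        ∃ u : ℕ, t < u ∧ u ≤ t + 2 * k ∧ u ≤ P.length ∧ 0 < psum (P.take u) := by
  obtain ⟨hlen, hct, -, hlast⟩ := hP
  have hcf : P.count false = n := by
    have := List.count_true_add_count_false P
    omega
  have hpf := isParkingPref_prefsOfPath hct hcf hlast
  rw [IsNaplesPF, parksAllFrom_prefsOfPath_iff, and_iff_right hpf]
  constructor
  · intro hparks t _ htL _ hneg
    obtain ⟨F, hF⟩ := Option.isSome_iff_exists.1 hparks
    exact exists_pos_psum_of_occAfter_eq_some hpf hcf.le hF htL hneg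
  · intro hcond
    rw [Option.isSome_iff_ne_none]
    intro hfail
    obtain ⟨t, ht, htL, hzero, hneg, hstuck⟩ :=
      exists_stuck_down_step_of_occAfter_eq_none hct.le hfail
    obtain ⟨u, htu, hu, huL, hpos⟩ := hcond t ht htL hzero hneg
    exact (hstuck u htu hu huL).not_gt hpos

/-- Characterization of ascending `k`-Naples parking functions.
Let `k ≥ 1` and let `P` be a `k`-Dyck path of length `n`, with corresponding ascending
parking preference `prefsOfPath P`.  Then `prefsOfPath P` is a `k`-Naples parking function
iff every Down step taking the partial sum from `0` to `-1` is followed, within the next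
`2k` steps, by a step after which the partial sum of `P` is strictly positive. -/
theorem statement2 (k n : ℕ) (hk : 1 ≤ k) (P : List Bool) (hP : IsKDyckPath k n P) :
    IsNaplesPF k n (prefsOfPath P) ↔
      ∀ t : ℕ, 1 ≤ t → t ≤ P.length → psum (P.take (t - 1)) = 0 →
        psum (P.take t) = -1 →
        ∃ u : ℕ, t < u ∧ u ≤ t + 2 * k ∧ u ≤ P.length ∧ 0 < psum (P.take u) :=
  statement2_general k n P hP
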